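/- arXiv:1410.0043 — 3 statements merged into one kernel-verified Lean document; each statement's English description precedes it below -/
import Mathlib

section
/- Let k be a field of characteristic zero and n ≥ 1. The restriction homomorphism from the GL_n-invariant polynomial functions on pairs of n×n matrices to polynomials in the diagonal entries is surjective onto the S_n-invariants: the algebra homomorphism ρ : k[x_{ij}, y_{ij} : 1 ≤ i,j ≤ n] → k[x_1,…,x_n, y_1,…,y_n] given by x_{ij} ↦ δ_{ij} x_i, y_{ij} ↦ δ_{ij} y_i maps the invariant subalgebra k[x_{ij}, y_{ij}]^{GL_n} into k[x_1,…,x_n, y_1,…,y_n]^{S_n}, and the induced map k[x_{ij}, y_{ij}]^{GL_n} → k[x_1,…,x_n, y_1,…,y_n]^{S_n} is surjective. -/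
/-!
STATEMENT 6: For a field k of characteristic zero and n ≥ 1, the restriction homomorphism
ρ : k[x_{ij}, y_{ij}] → k[x_1,…,x_n,y_1,…,y_n], x_{ij} ↦ δ_{ij} x_i, y_{ij} ↦ δ_{ij} y_i,
maps the GL_n-invariants (for simultaneous conjugation) into the S_n-invariants
(for simultaneous permutation), and the induced map on invariants is surjective.
-/

noncomputable section

open MvPolynomial Matrix

/-- The polynomial ring `k[x_{ij}, y_{ij} : 1 ≤ i,j ≤ n]` on the entries of two
generic n×n matrices. -/
abbrev RR (k : Type*) [Field k] (n : ℕ) : Type _ :=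
  MvPolynomial ((Fin n × Fin n) ⊕ (Fin n × Fin n)) k

/-- The polynomial ring `k[x_1,…,x_n, y_1,…,y_n]`. -/
abbrev QQ (k : Type*) [Field k] (n : ℕ) : Type _ := MvPolynomial (Fin n ⊕ Fin n) k

/-- The restriction map `ρ : x_{ij} ↦ δ_{ij} x_i, y_{ij} ↦ δ_{ij} y_i`. -/
def resMap (k : Type*) [Field k] (n : ℕ) : RR k n →ₐ[k] QQ k n :=
  MvPolynomial.aeval fun v =>
    match v with
    | Sum.inl (i, j) => if i = j then MvPolynomial.X (Sum.inl i) else 0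
    | Sum.inr (i, j) => if i = j then MvPolynomial.X (Sum.inr i) else 0

/-- The action of `g ∈ GL_n(k)` on `k[x_{ij}, y_{ij}]` by simultaneous conjugation
`X ↦ g X g⁻¹`, `Y ↦ g Y g⁻¹`. -/
def conjAct (k : Type*) [Field k] (n : ℕ) (g : GL (Fin n) k) : RR k n →ₐ[k] RR k n :=
  MvPolynomial.aeval fun v =>
    match v with
    | Sum.inl (i, j) =>
        ∑ a : Fin n, ∑ b : Fin n,
          MvPolynomial.C ((g : Matrix (Fin n) (Fin n) k) i a *
              ((g⁻¹ : GL (Fin n) k) : Matrix (Fin n) (Fin n) k) b j) *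
            MvPolynomial.X (Sum.inl (a, b))
    | Sum.inr (i, j) =>
        ∑ a : Fin n, ∑ b : Fin n,
          MvPolynomial.C ((g : Matrix (Fin n) (Fin n) k) i a *
              ((g⁻¹ : GL (Fin n) k) : Matrix (Fin n) (Fin n) k) b j) *
            MvPolynomial.X (Sum.inr (a, b))

/-- The action of `σ ∈ S_n` on `k[x_1,…,x_n,y_1,…,y_n]` simultaneously permuting
the `x_i` and the `y_i`. -/
def permAct (k : Type*) [Field k] (n : ℕ) (σ : Equiv.Perm (Fin n)) : QQ k n →ₐ[k] QQ k n :=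
  MvPolynomial.rename (Sum.map σ σ)

namespace Stmt6

variable (k : Type*) [Field k] (n : ℕ)

/-- permutation matrix of σ -/
def pmat (σ : Equiv.Perm (Fin n)) : Matrix (Fin n) (Fin n) k :=
  Matrix.of fun i j => if σ j = i then 1 else 0

lemma pmat_mul (σ τ : Equiv.Perm (Fin n)) :
    pmat k n σ * pmat k n τ = pmat k n (σ * τ) := by
  ext i j
  simp [pmat, Matrix.mul_apply, ite_and]
  congr 1

lemma pmat_one : pmat k n 1 = 1 := by
  ext i j
  simp [pmat, Matrix.one_apply, eq_comm]

/-- permutation matrix as invertible element -/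
def Pg (σ : Equiv.Perm (Fin n)) : GL (Fin n) k :=
  ⟨pmat k n σ, pmat k n σ⁻¹,
    by rw [pmat_mul, mul_inv_cancel, pmat_one],
    by rw [pmat_mul, inv_mul_cancel, pmat_one]⟩

lemma res_conj_perm (σ : Equiv.Perm (Fin n)) :
    (resMap k n).comp (conjAct k n (Pg k n σ)) = (permAct k n σ⁻¹).comp (resMap k n) := by
  apply MvPolynomial.algHom_ext
  rintro (⟨i, j⟩ | ⟨i, j⟩) <;>
  · simp only [AlgHom.comp_apply, conjAct, resMap, permAct, aeval_X, map_sum, _root_.map_mul,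
      aeval_C, algebraMap_eq, Pg, pmat, Units.inv_mk, Matrix.of_apply, apply_ite,
      C_1, map_zero, ite_mul, mul_ite, zero_mul, mul_zero, one_mul, mul_one,
      rename_X]
    simp only [Finset.sum_ite_eq, Finset.mem_univ, if_true]
    simp only [Equiv.apply_eq_iff_eq_symm_apply]
    simp only [Finset.sum_ite_eq', Finset.mem_univ, if_true]
    simp [Equiv.Perm.inv_def, Sum.map_inl, Sum.map_inr, EmbeddingLike.apply_eq_iff_eq]
    tauto


/-- Part 1: GL-invariants restrict to S_n-invariants. -/
lemma part1 (p : RR k n) (hp : ∀ g : GL (Fin n) k, conjAct k n g p = p)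
    (σ : Equiv.Perm (Fin n)) : permAct k n σ (resMap k n p) = resMap k n p := by
  have := congrArg (fun φ => φ p) (res_conj_perm k n σ⁻¹)
  simp only [AlgHom.comp_apply, inv_inv] at this
  rw [← this, hp]

/-- the subalgebra of GL-invariants -/
def GInv : Subalgebra k (RR k n) where
  carrier := {p | ∀ g : GL (Fin n) k, conjAct k n g p = p}
  add_mem' := fun {a b} ha hb g => by simp [map_add, ha g, hb g]
  mul_mem' := fun {a b} ha hb g => by simp [_root_.map_mul, ha g, hb g]
  algebraMap_mem' := fun r g => (conjAct k n g).commutes r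

/-- image of the invariants -/
def B : Subalgebra k (QQ k n) := (GInv k n).map (resMap k n)

/-- the generic matrices -/
def Xm : Matrix (Fin n) (Fin n) (RR k n) := Matrix.of fun i j => X (Sum.inl (i, j))
def Ym : Matrix (Fin n) (Fin n) (RR k n) := Matrix.of fun i j => X (Sum.inr (i, j))

lemma trace_map {m : Type*} [Fintype m] {α β : Type*} [AddCommMonoid α] [AddCommMonoid β]
    (M : Matrix m m α) (f : α →+ β) : Matrix.trace (M.map f) = f (Matrix.trace M) := by
  simp [Matrix.trace, Matrix.diag, map_sum]

lemma conjAct_Xm (g : GL (Fin n) k) :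
    (Xm k n).map (conjAct k n g) =
      ((g : Matrix (Fin n) (Fin n) k).map C) * Xm k n *
        (((g⁻¹ : GL (Fin n) k) : Matrix (Fin n) (Fin n) k).map C) := by
  refine Matrix.ext fun i j => ?_
  simp only [Matrix.map_apply, conjAct, Xm, Matrix.of_apply, aeval_X, Matrix.mul_apply,
    Finset.sum_mul, Finset.mul_sum, _root_.map_mul]
  rw [Finset.sum_comm]
  refine Finset.sum_congr rfl fun a _ => Finset.sum_congr rfl fun b _ => by ring

lemma conjAct_Ym (g : GL (Fin n) k) :
    (Ym k n).map (conjAct k n g) =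
      ((g : Matrix (Fin n) (Fin n) k).map C) * Ym k n *
        (((g⁻¹ : GL (Fin n) k) : Matrix (Fin n) (Fin n) k).map C) := by
  refine Matrix.ext fun i j => ?_
  simp only [Matrix.map_apply, conjAct, Ym, Matrix.of_apply, aeval_X, Matrix.mul_apply,
    Finset.sum_mul, Finset.mul_sum, _root_.map_mul]
  rw [Finset.sum_comm]
  refine Finset.sum_congr rfl fun a _ => Finset.sum_congr rfl fun b _ => by ring

lemma conj_pow {α : Type*} [CommRing α] (P P' M : Matrix (Fin n) (Fin n) α)
    (h : P * P' = 1) (h' : P' * P = 1) (a : ℕ) :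
    (P * M * P') ^ a = P * M ^ a * P' := by
  induction a with
  | zero => simp [h]
  | succ a ih =>
      rw [pow_succ, ih, pow_succ]
      calc P * M ^ a * P' * (P * M * P') = P * M ^ a * (P' * P) * M * P' := by
              simp only [mul_assoc]
        _ = P * (M ^ a * M) * P' := by rw [h']; simp only [mul_assoc, one_mul, mul_one]

lemma conjAct_trace (g : GL (Fin n) k) (a b : ℕ) :
    conjAct k n g (Matrix.trace (Xm k n ^ a * Ym k n ^ b)) =
      Matrix.trace (Xm k n ^ a * Ym k n ^ b) := by
  set P : Matrix (Fin n) (Fin n) (RR k n) := (g : Matrix (Fin n) (Fin n) k).map C with hP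
  set P' : Matrix (Fin n) (Fin n) (RR k n) :=
    ((g⁻¹ : GL (Fin n) k) : Matrix (Fin n) (Fin n) k).map C with hP'
  have hPP' : P * P' = 1 := by
    rw [hP, hP', ← Matrix.map_mul, ← Units.val_mul, mul_inv_cancel, Units.val_one,
      Matrix.map_one _ (map_zero C) (C_1)]
  have hP'P : P' * P = 1 := by
    rw [hP, hP', ← Matrix.map_mul, ← Units.val_mul, inv_mul_cancel, Units.val_one,
      Matrix.map_one _ (map_zero C) (C_1)]
  have key : (Xm k n ^ a * Ym k n ^ b).map (conjAct k n g) =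
      P * (Xm k n ^ a * Ym k n ^ b) * P' := by
    have h1 : (Xm k n ^ a * Ym k n ^ b).map (conjAct k n g) =
        ((conjAct k n g).mapMatrix (Xm k n)) ^ a * ((conjAct k n g).mapMatrix (Ym k n)) ^ b := by
      rw [← _root_.map_pow, ← _root_.map_pow, ← _root_.map_mul]
      rfl
    rw [h1]
    have hx : (conjAct k n g).mapMatrix (Xm k n) = P * Xm k n * P' := conjAct_Xm k n g
    have hy : (conjAct k n g).mapMatrix (Ym k n) = P * Ym k n * P' := conjAct_Ym k n g
    rw [hx, hy, conj_pow _ _ _ _ hPP' hP'P, conj_pow _ _ _ _ hPP' hP'P]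
    calc P * Xm k n ^ a * P' * (P * Ym k n ^ b * P')
        = P * Xm k n ^ a * (P' * P) * Ym k n ^ b * P' := by simp only [mul_assoc]
      _ = P * (Xm k n ^ a * Ym k n ^ b) * P' := by
          rw [hP'P]; simp only [mul_assoc, one_mul, mul_one]
  have := trace_map (Xm k n ^ a * Ym k n ^ b) (conjAct k n g).toLinearMap.toAddMonoidHom
  calc conjAct k n g (Matrix.trace (Xm k n ^ a * Ym k n ^ b))
      = Matrix.trace ((Xm k n ^ a * Ym k n ^ b).map (conjAct k n g)) := this.symm
    _ = Matrix.trace (P * (Xm k n ^ a * Ym k n ^ b) * P') := by rw [key]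
    _ = Matrix.trace (P' * (P * (Xm k n ^ a * Ym k n ^ b))) := by
          rw [Matrix.trace_mul_comm]
    _ = Matrix.trace (Xm k n ^ a * Ym k n ^ b) := by rw [← mul_assoc, hP'P, one_mul]

/-- the power sums `p_{a,b} = ∑ x_i^a y_i^b` -/
def psum (a b : ℕ) : QQ k n := ∑ i : Fin n, X (Sum.inl i) ^ a * X (Sum.inr i) ^ b

lemma resMap_Xm : (Xm k n).map (resMap k n) = Matrix.diagonal fun i => X (Sum.inl i) := by
  ext i j
  simp [Xm, resMap, Matrix.diagonal_apply]

lemma resMap_Ym : (Ym k n).map (resMap k n) = Matrix.diagonal fun i => X (Sum.inr i) := by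
  ext i j
  simp [Ym, resMap, Matrix.diagonal_apply]

lemma resMap_trace (a b : ℕ) :
    resMap k n (Matrix.trace (Xm k n ^ a * Ym k n ^ b)) = psum k n a b := by
  have := trace_map (Xm k n ^ a * Ym k n ^ b) (resMap k n).toLinearMap.toAddMonoidHom
  have key : (Xm k n ^ a * Ym k n ^ b).map (resMap k n) =
      Matrix.diagonal fun i => X (Sum.inl i) ^ a * X (Sum.inr i) ^ b := by
    have h1 : (Xm k n ^ a * Ym k n ^ b).map (resMap k n) =
        ((resMap k n).mapMatrix (Xm k n)) ^ a * ((resMap k n).mapMatrix (Ym k n)) ^ b := by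
      rw [← _root_.map_pow, ← _root_.map_pow, ← _root_.map_mul]
      rfl
    rw [h1]
    have hx : (resMap k n).mapMatrix (Xm k n) = Matrix.diagonal fun i => X (Sum.inl i) :=
      resMap_Xm k n
    have hy : (resMap k n).mapMatrix (Ym k n) = Matrix.diagonal fun i => X (Sum.inr i) :=
      resMap_Ym k n
    rw [hx, hy, Matrix.diagonal_pow, Matrix.diagonal_pow, Matrix.diagonal_mul_diagonal]
    congr 1
  calc resMap k n (Matrix.trace (Xm k n ^ a * Ym k n ^ b))
      = Matrix.trace ((Xm k n ^ a * Ym k n ^ b).map (resMap k n)) := this.symm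
    _ = psum k n a b := by rw [key, Matrix.trace_diagonal]; rfl

lemma psum_mem (a b : ℕ) : psum k n a b ∈ B k n :=
  ⟨Matrix.trace (Xm k n ^ a * Ym k n ^ b), fun g => conjAct_trace k n g a b, resMap_trace k n a b⟩


/-- the subalgebra generated by the power sums -/
def A : Subalgebra k (QQ k n) := Algebra.adjoin k {q | ∃ a b, q = psum k n a b}

lemma A_le_B : A k n ≤ B k n := by
  rw [A, Algebra.adjoin_le_iff]
  rintro q ⟨a, b, rfl⟩
  exact psum_mem k n a b

/-- permuted exponent vector -/
def pd (σ : Equiv.Perm (Fin n)) (d : (Fin n ⊕ Fin n) →₀ ℕ) : (Fin n ⊕ Fin n) →₀ ℕ :=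
  Finsupp.equivMapDomain (Equiv.sumCongr σ σ) d

lemma pd_apply_inl (σ : Equiv.Perm (Fin n)) (d : (Fin n ⊕ Fin n) →₀ ℕ) (i : Fin n) :
    pd n σ d (Sum.inl i) = d (Sum.inl (σ⁻¹ i)) := rfl

lemma pd_apply_inr (σ : Equiv.Perm (Fin n)) (d : (Fin n ⊕ Fin n) →₀ ℕ) (i : Fin n) :
    pd n σ d (Sum.inr i) = d (Sum.inr (σ⁻¹ i)) := rfl

lemma pd_pd (σ τ : Equiv.Perm (Fin n)) (d : (Fin n ⊕ Fin n) →₀ ℕ) :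
    pd n σ (pd n τ d) = pd n (σ * τ) d := by
  ext x
  rcases x with i | i <;>
    simp [pd_apply_inl, pd_apply_inr, _root_.mul_inv_rev, Equiv.Perm.mul_apply]

lemma permAct_monomial (σ : Equiv.Perm (Fin n)) (d : (Fin n ⊕ Fin n) →₀ ℕ) (c : k) :
    permAct k n σ (monomial d c) = monomial (pd n σ d) c := by
  show rename (Sum.map σ σ) (monomial d c) = _
  rw [rename_monomial]
  congr 1
  rw [pd, Finsupp.equivMapDomain_eq_mapDomain]
  rfl

/-- symmetrized monomial -/
def T (d : (Fin n ⊕ Fin n) →₀ ℕ) : QQ k n :=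
  ∑ σ : Equiv.Perm (Fin n), monomial (pd n σ d) (1 : k)

lemma T_pd (τ : Equiv.Perm (Fin n)) (d : (Fin n ⊕ Fin n) →₀ ℕ) :
    T k n (pd n τ d) = T k n d := by
  unfold T
  rw [← Equiv.sum_comp (Equiv.mulRight τ) (fun σ => monomial (pd n σ d) (1 : k))]
  refine Finset.sum_congr rfl fun σ _ => ?_
  rw [pd_pd]
  rfl

lemma permAct_T (τ : Equiv.Perm (Fin n)) (d : (Fin n ⊕ Fin n) →₀ ℕ) :
    permAct k n τ (T k n d) = T k n d := by
  unfold T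
  rw [map_sum]
  rw [← Equiv.sum_comp (Equiv.mulLeft τ) (fun σ => monomial (pd n σ d) (1 : k))]
  refine Finset.sum_congr rfl fun σ _ => ?_
  rw [permAct_monomial, pd_pd]
  rfl

/-- pair support -/
def psupp (d : (Fin n ⊕ Fin n) →₀ ℕ) : Finset (Fin n) :=
  Finset.univ.filter fun i => d (Sum.inl i) ≠ 0 ∨ d (Sum.inr i) ≠ 0

lemma mem_psupp (d : (Fin n ⊕ Fin n) →₀ ℕ) (i : Fin n) :
    i ∈ psupp n d ↔ d (Sum.inl i) ≠ 0 ∨ d (Sum.inr i) ≠ 0 := by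
  simp [psupp]

/-- a single pair placed at position m -/
def sh (m : Fin n) (a b : ℕ) : (Fin n ⊕ Fin n) →₀ ℕ :=
  Finsupp.single (Sum.inl m) a + Finsupp.single (Sum.inr m) b

lemma sh_apply_inl (m i : Fin n) (a b : ℕ) :
    sh n m a b (Sum.inl i) = if i = m then a else 0 := by
  simp [sh, Finsupp.single_apply, eq_comm]

lemma sh_apply_inr (m i : Fin n) (a b : ℕ) :
    sh n m a b (Sum.inr i) = if i = m then b else 0 := by
  simp [sh, Finsupp.single_apply, eq_comm]

lemma pd_sh (σ : Equiv.Perm (Fin n)) (m : Fin n) (a b : ℕ) :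
    pd n σ (sh n m a b) = sh n (σ m) a b := by
  ext x
  rcases x with i | i
  · rw [pd_apply_inl, sh_apply_inl, sh_apply_inl]
    by_cases h : i = σ m
    · simp [h]
    · have h' : σ⁻¹ i ≠ m := fun hc => h (by rw [← hc]; simp)
      simp [h, h']
      exact fun hc => absurd hc h'
  · rw [pd_apply_inr, sh_apply_inr, sh_apply_inr]
    by_cases h : i = σ m
    · simp [h]
    · have h' : σ⁻¹ i ≠ m := fun hc => h (by rw [← hc]; simp)
      simp [h, h']
      exact fun hc => absurd hc h'

lemma pd_add (σ : Equiv.Perm (Fin n)) (e f : (Fin n ⊕ Fin n) →₀ ℕ) :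
    pd n σ (e + f) = pd n σ e + pd n σ f := by
  ext x
  rcases x with i | i <;> simp [pd_apply_inl, pd_apply_inr]

lemma T_mul_psum (d' : (Fin n ⊕ Fin n) →₀ ℕ) (a b : ℕ) :
    T k n d' * psum k n a b = ∑ m : Fin n, T k n (d' + sh n m a b) := by
  unfold T psum
  rw [Finset.sum_mul_sum]
  have step : ∀ σ : Equiv.Perm (Fin n),
      (∑ m : Fin n, (monomial (pd n σ d')) (1 : k) *
          (X (Sum.inl m) ^ a * X (Sum.inr m) ^ b)) =
        ∑ m : Fin n, (monomial (pd n σ (d' + sh n m a b))) (1 : k) := by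
    intro σ
    calc (∑ m : Fin n, (monomial (pd n σ d')) (1 : k) *
            (X (Sum.inl m) ^ a * X (Sum.inr m) ^ b))
        = ∑ m : Fin n, (monomial (pd n σ d' + sh n m a b)) (1 : k) := by
          refine Finset.sum_congr rfl fun m _ => ?_
          rw [X_pow_eq_monomial, X_pow_eq_monomial, monomial_mul, monomial_mul]
          rw [one_mul, one_mul, sh]
      _ = ∑ m : Fin n, (fun t => (monomial (pd n σ d' + sh n t a b)) (1 : k)) (σ m) :=
          (Equiv.sum_comp σ _).symm
      _ = ∑ m : Fin n, (monomial (pd n σ (d' + sh n m a b))) (1 : k) := by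
          refine Finset.sum_congr rfl fun m _ => ?_
          simp only [pd_add, pd_sh]
  rw [Finset.sum_congr rfl fun σ _ => step σ, Finset.sum_comm]

lemma pd_swap (j m : Fin n) (d' : (Fin n ⊕ Fin n) →₀ ℕ) (a b : ℕ)
    (h1 : d' (Sum.inl j) = 0) (h2 : d' (Sum.inr j) = 0)
    (h3 : d' (Sum.inl m) = 0) (h4 : d' (Sum.inr m) = 0) :
    pd n (Equiv.swap j m) (d' + sh n j a b) = d' + sh n m a b := by
  ext x
  have hsymm : ∀ i : Fin n, (Equiv.swap j m)⁻¹ i = Equiv.swap j m i := by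
    intro i; rw [Equiv.Perm.inv_def, Equiv.symm_swap]
  rcases x with i | i
  · rw [pd_apply_inl]
    simp only [Finsupp.add_apply, sh_apply_inl, hsymm]
    by_cases hij : i = j
    · rw [hij, Equiv.swap_apply_left, h3, h1]
      by_cases hjm : m = j
      · simp [hjm]
      · simp [hjm, Ne.symm hjm]
    · by_cases him : i = m
      · rw [him, Equiv.swap_apply_right, h1, h3]
        simp
      · rw [Equiv.swap_apply_of_ne_of_ne hij him]
        simp [hij, him]
  · rw [pd_apply_inr]
    simp only [Finsupp.add_apply, sh_apply_inr, hsymm]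
    by_cases hij : i = j
    · rw [hij, Equiv.swap_apply_left, h4, h2]
      by_cases hjm : m = j
      · simp [hjm]
      · simp [hjm, Ne.symm hjm]
    · by_cases him : i = m
      · rw [him, Equiv.swap_apply_right, h2, h4]
        simp
      · rw [Equiv.swap_apply_of_ne_of_ne hij him]
        simp [hij, him]


lemma pd_zero (σ : Equiv.Perm (Fin n)) : pd n σ 0 = 0 := by
  ext x
  rcases x with i | i <;> simp [pd_apply_inl, pd_apply_inr]

lemma decomp (d : (Fin n ⊕ Fin n) →₀ ℕ) (j : Fin n) :
    ∃ d' : (Fin n ⊕ Fin n) →₀ ℕ,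
      d = d' + sh n j (d (Sum.inl j)) (d (Sum.inr j)) ∧
      d' (Sum.inl j) = 0 ∧ d' (Sum.inr j) = 0 ∧
      psupp n d' = (psupp n d).erase j := by
  refine ⟨(Finsupp.erase (Sum.inr j) (Finsupp.erase (Sum.inl j) d)), ?_, ?_, ?_, ?_⟩
  · ext x
    rcases x with i | i <;>
    · simp only [Finsupp.add_apply, sh_apply_inl, sh_apply_inr]
      by_cases hij : i = j
      · subst hij
        simp [Finsupp.erase_same, Finsupp.erase_ne]
      · simp [Finsupp.erase_ne, hij, (by simp [hij] : (Sum.inl i : Fin n ⊕ Fin n) ≠ Sum.inl j),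
          (by simp [hij] : (Sum.inr i : Fin n ⊕ Fin n) ≠ Sum.inr j),
          (by simp : (Sum.inl i : Fin n ⊕ Fin n) ≠ Sum.inr j),
          (by simp : (Sum.inr i : Fin n ⊕ Fin n) ≠ Sum.inl j)]
  · simp [Finsupp.erase_same, Finsupp.erase_ne, (by simp : (Sum.inl j : Fin n ⊕ Fin n) ≠ Sum.inr j)]
  · simp [Finsupp.erase_same]
  · ext i
    simp only [mem_psupp, Finset.mem_erase]
    by_cases hij : i = j
    · subst hij
      simp [Finsupp.erase_same, Finsupp.erase_ne, (by simp : (Sum.inl i : Fin n ⊕ Fin n) ≠ Sum.inr i)]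
    · simp [Finsupp.erase_ne, hij, (by simp [hij] : (Sum.inl i : Fin n ⊕ Fin n) ≠ Sum.inl j),
        (by simp [hij] : (Sum.inr i : Fin n ⊕ Fin n) ≠ Sum.inr j),
        (by simp : (Sum.inl i : Fin n ⊕ Fin n) ≠ Sum.inr j),
        (by simp : (Sum.inr i : Fin n ⊕ Fin n) ≠ Sum.inl j)]

lemma psupp_add_sh_mem (d' : (Fin n ⊕ Fin n) →₀ ℕ) (m : Fin n) (hm : m ∈ psupp n d')
    (a b : ℕ) : psupp n (d' + sh n m a b) = psupp n d' := by
  rw [mem_psupp] at hm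
  ext i
  simp only [mem_psupp, Finsupp.add_apply, sh_apply_inl, sh_apply_inr]
  by_cases him : i = m
  · subst him
    simp only [if_pos rfl]
    omega
  · simp [him]

lemma T_mem [CharZero k] (d : (Fin n ⊕ Fin n) →₀ ℕ) : T k n d ∈ A k n := by
  suffices H : ∀ (r : ℕ) (d : (Fin n ⊕ Fin n) →₀ ℕ), (psupp n d).card = r →
      T k n d ∈ A k n from H _ d rfl
  intro r
  induction r using Nat.strong_induction_on with
  | _ r ih =>
    intro d hd
    rcases Nat.eq_zero_or_pos r with rfl | hr
    · have hd0 : d = 0 := by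
        rw [Finset.card_eq_zero] at hd
        ext x
        have hx : ∀ i : Fin n, d (Sum.inl i) = 0 ∧ d (Sum.inr i) = 0 := by
          intro i
          have : i ∉ psupp n d := by simp [hd]
          rw [mem_psupp] at this
          push_neg at this
          exact this
        rcases x with i | i <;> simp [(hx i).1, (hx i).2]
      rw [hd0]
      have hT0 : T k n (0 : (Fin n ⊕ Fin n) →₀ ℕ) =
          (Fintype.card (Equiv.Perm (Fin n))) • (1 : QQ k n) := by
        unfold T
        rw [Finset.sum_congr rfl fun σ _ => by rw [pd_zero, monomial_zero', C_1],
          Finset.sum_const, Finset.card_univ]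
      rw [hT0]
      exact nsmul_mem (one_mem _) _
    · have hne : (psupp n d).Nonempty := by
        rw [← Finset.card_pos, hd]; exact hr
      obtain ⟨j, hj⟩ := hne
      obtain ⟨d', hdd, h1, h2, hps⟩ := decomp n d j
      set a := d (Sum.inl j) with ha
      set b := d (Sum.inr j) with hb
      have hd' : (psupp n d').card = r - 1 := by
        rw [hps, Finset.card_erase_of_mem hj, hd]
      have hrn : r ≤ n := by
        rw [← hd]
        have := Finset.card_le_univ (psupp n d)
        simpa using this
      have hcompl : ∀ m ∈ (psupp n d')ᶜ, T k n (d' + sh n m a b) = T k n d := by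
        intro m hm
        rw [Finset.mem_compl, mem_psupp] at hm
        push_neg at hm
        rw [← pd_swap n j m d' a b h1 h2 hm.1 hm.2, T_pd, ← hdd]
      have key := T_mul_psum k n d' a b
      rw [← Finset.sum_add_sum_compl (psupp n d'), Finset.sum_congr rfl hcompl,
        Finset.sum_const, Finset.card_compl, Fintype.card_fin, hd'] at key
      have hc0 : ((n - (r - 1) : ℕ) : k) ≠ 0 := Nat.cast_ne_zero.2 (by omega)
      have hA1 : T k n d' ∈ A k n := ih (r - 1) (by omega) d' hd'
      have hA2 : ∀ m ∈ psupp n d', T k n (d' + sh n m a b) ∈ A k n := fun m hm =>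
        ih (r - 1) (by omega) _ (by rw [psupp_add_sh_mem n d' m hm a b]; exact hd')
      have hps' : psum k n a b ∈ A k n := Algebra.subset_adjoin ⟨a, b, rfl⟩
      have hsolve : ((n - (r - 1) : ℕ) : k) • T k n d =
          T k n d' * psum k n a b - ∑ m ∈ psupp n d', T k n (d' + sh n m a b) := by
        rw [Nat.cast_smul_eq_nsmul, key, add_sub_cancel_left]
      have hmem : ((n - (r - 1) : ℕ) : k) • T k n d ∈ A k n := by
        rw [hsolve]
        exact sub_mem (mul_mem hA1 hps') (sum_mem hA2)
      have := Subalgebra.smul_mem (A k n) hmem ((n - (r - 1) : ℕ) : k)⁻¹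
      rwa [inv_smul_smul₀ hc0] at this

lemma q_mem [CharZero k] (q : QQ k n) (hq : ∀ σ : Equiv.Perm (Fin n), permAct k n σ q = q) :
    q ∈ A k n := by
  have hc0 : ((Fintype.card (Equiv.Perm (Fin n)) : ℕ) : k) ≠ 0 :=
    Nat.cast_ne_zero.2 Fintype.card_ne_zero
  have h1 : (∑ σ : Equiv.Perm (Fin n), permAct k n σ q) =
      (Fintype.card (Equiv.Perm (Fin n))) • q := by
    rw [Finset.sum_congr rfl fun σ _ => hq σ, Finset.sum_const, Finset.card_univ]
  have h2 : (∑ σ : Equiv.Perm (Fin n), permAct k n σ q) =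
      ∑ d ∈ q.support, coeff d q • T k n d := by
    calc (∑ σ : Equiv.Perm (Fin n), permAct k n σ q)
        = ∑ σ : Equiv.Perm (Fin n),
            permAct k n σ (∑ d ∈ q.support, monomial d (coeff d q)) := by
          rw [support_sum_monomial_coeff]
      _ = ∑ σ : Equiv.Perm (Fin n), ∑ d ∈ q.support, monomial (pd n σ d) (coeff d q) := by
          refine Finset.sum_congr rfl fun σ _ => ?_
          rw [map_sum]
          exact Finset.sum_congr rfl fun d _ => permAct_monomial k n σ d (coeff d q)
      _ = ∑ d ∈ q.support, ∑ σ : Equiv.Perm (Fin n), monomial (pd n σ d) (coeff d q) :=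
          Finset.sum_comm
      _ = ∑ d ∈ q.support, coeff d q • T k n d := by
          refine Finset.sum_congr rfl fun d _ => ?_
          rw [T, Finset.smul_sum]
          exact Finset.sum_congr rfl fun σ _ => by
            rw [smul_monomial, smul_eq_mul, mul_one]
  have hq' : q = ((Fintype.card (Equiv.Perm (Fin n)) : ℕ) : k)⁻¹ •
      ∑ d ∈ q.support, coeff d q • T k n d := by
    rw [← h2, h1, ← Nat.cast_smul_eq_nsmul k, inv_smul_smul₀ hc0]
  rw [hq']
  exact Subalgebra.smul_mem _ (sum_mem fun d _ =>
    Subalgebra.smul_mem _ (T_mem k n d) _) _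

end Stmt6

set_option linter.unusedVariables false in
theorem statement_6 (k : Type*) [Field k] [CharZero k] (n : ℕ) (hn : 1 ≤ n) :
    (∀ p : RR k n, (∀ g : GL (Fin n) k, conjAct k n g p = p) →
        ∀ σ : Equiv.Perm (Fin n), permAct k n σ (resMap k n p) = resMap k n p) ∧
    (∀ q : QQ k n, (∀ σ : Equiv.Perm (Fin n), permAct k n σ q = q) →
        ∃ p : RR k n, (∀ g : GL (Fin n) k, conjAct k n g p = p) ∧ resMap k n p = q) := by
  constructor
  · exact fun p hp σ => Stmt6.part1 k n p hp σ
  · intro q hq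
    have hmem := Stmt6.A_le_B k n (Stmt6.q_mem k n q hq)
    rw [Stmt6.B, Subalgebra.mem_map] at hmem
    obtain ⟨p, hp, hpq⟩ := hmem
    exact ⟨p, hp, hpq⟩

end
end

section
/- Let k be a field of characteristic zero, g a finite-dimensional Lie algebra over k with dual space g* and basis e_1, …, e_r with dual basis e^1, …, e^r, and let a be any Lie algebra over k. Define the commutative k-algebra a_g := Sym_k(g* ⊗ a)/I, where I is the ideal generated by all elements x ⊗ [ξ,η] − Σ_{s,t=1}^r x([e_s, e_t]) · (e^s ⊗ ξ)(e^t ⊗ η) for x ∈ g*, ξ, η ∈ a. Then for every commutative k-algebra B, the map sending an algebra homomorphism f : a_g → B to the linear map a → g ⊗ B, ξ ↦ Σ_{s=1}^r e_s ⊗ f(e^s ⊗ ξ), is a bijection from Hom_{CommAlg_k}(a_g, B) onto Hom_{LieAlg_k}(a, g ⊗ B), natural in B. In other words, a_g represents the functor B ↦ Hom_{LieAlg_k}(a, g ⊗ B) of representations of a in g. -/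
/-!
STATEMENT 10: For a finite-dimensional Lie algebra g (with basis e and dual basis e^s)
and any Lie algebra a over a field k of characteristic 0, the commutative algebra
a_g = Sym(g* ⊗ a)/I (realized as the tensor algebra of g* ⊗ a modulo commutators and
the relations x ⊗ [ξ,η] − Σ_{s,t} x([e_s,e_t])·(e^s ⊗ ξ)(e^t ⊗ η)) represents the
functor B ↦ Hom_{LieAlg}(a, g ⊗ B): the map sending an algebra map f : a_g → B to
ξ ↦ Σ_s f(e^s ⊗ ξ) ⊗ e_s is a bijection onto the set of Lie algebra homomorphisms
a → B ⊗ g, naturally in B.  (Here B ⊗[k] g carries the current Lie algebra bracket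
[b ⊗ x, c ⊗ y] = bc ⊗ [x,y].)
-/

noncomputable section

open TensorProduct

universe u

variable (k : Type u) [Field k] [CharZero k]
variable (g : Type u) [LieRing g] [LieAlgebra k g]
variable (a : Type u) [LieRing a] [LieAlgebra k a]
variable (r : ℕ) (e : Module.Basis (Fin r) k g)

/-- The vector space `g* ⊗ a`. -/
abbrev Wspace : Type u := TensorProduct k (Module.Dual k g) a

/-- The generator map into the tensor algebra of `g* ⊗ a`. -/
def ιW : Wspace k g a →ₗ[k] TensorAlgebra k (Wspace k g a) := TensorAlgebra.ι k

/-- The relations imposing commutativity together with the defining relations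
`x ⊗ [ξ,η] = Σ_{s,t} x([e_s,e_t])·(e^s ⊗ ξ)(e^t ⊗ η)`; the quotient of the tensor
algebra by (the two-sided ideal they generate) is `Sym(g* ⊗ a)/I`. -/
inductive Jrel : TensorAlgebra k (Wspace k g a) → TensorAlgebra k (Wspace k g a) → Prop
  | comm (u v : TensorAlgebra k (Wspace k g a)) : Jrel (u * v) (v * u)
  | lie (x : Module.Dual k g) (ξ η : a) :
      Jrel (ιW k g a (x ⊗ₜ[k] ⁅ξ, η⁆))
        (∑ s : Fin r, ∑ t : Fin r,
          x ⁅e s, e t⁆ •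
            (ιW k g a (e.dualBasis s ⊗ₜ[k] ξ) * ιW k g a (e.dualBasis t ⊗ₜ[k] η)))

/-- The representing commutative algebra `a_g = Sym(g* ⊗ a)/I`. -/
abbrev RepAlg : Type u := RingQuot (Jrel k g a r e)

/-- The quotient map. -/
def mkR : TensorAlgebra k (Wspace k g a) →ₐ[k] RepAlg k g a r e :=
  RingQuot.mkAlgHom k (Jrel k g a r e)

/-- The map sending an algebra homomorphism `f : a_g → B` to the function
`a → B ⊗ g`, `ξ ↦ Σ_s f(e^s ⊗ ξ) ⊗ e_s`. -/
def Θ (B : Type u) [CommRing B] [Algebra k B] (f : RepAlg k g a r e →ₐ[k] B) :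
    a → TensorProduct k B g :=
  fun ξ => ∑ s : Fin r, f (mkR k g a r e (ιW k g a (e.dualBasis s ⊗ₜ[k] ξ))) ⊗ₜ[k] e s

/-- The Lie algebra structure over `k` on the current Lie algebra `B ⊗[k] g`
(restriction of scalars of its `B`-Lie algebra structure). -/
instance instLieAlgK (B : Type u) [CommRing B] [Algebra k B] :
    LieAlgebra k (TensorProduct k B g) where
  lie_smul t x y := by
    rw [← algebraMap_smul B t y, lie_smul, algebraMap_smul]

/-! ### Auxiliary lemmas -/

section Aux

lemma sum_lie' {L : Type*} [LieRing L] {ι : Type*} (s : Finset ι) (f : ι → L) (x : L) :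
    ⁅∑ i ∈ s, f i, x⁆ = ∑ i ∈ s, ⁅f i, x⁆ := by
  classical
  induction s using Finset.induction_on with
  | empty => simp
  | insert _ _ h ih => simp [Finset.sum_insert h, add_lie, ih]

lemma lie_sum' {L : Type*} [LieRing L] {ι : Type*} (s : Finset ι) (f : ι → L) (x : L) :
    ⁅x, ∑ i ∈ s, f i⁆ = ∑ i ∈ s, ⁅x, f i⁆ := by
  classical
  induction s using Finset.induction_on with
  | empty => simp
  | insert _ _ h ih => simp [Finset.sum_insert h, lie_add, ih]

variable (B : Type u) [CommRing B] [Algebra k B]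

/-- Contraction of the `g`-factor of `B ⊗ g` against a functional `x : g*`. -/
def cB (x : Module.Dual k g) : TensorProduct k B g →ₗ[k] B :=
  (TensorProduct.rid k B).toLinearMap ∘ₗ LinearMap.lTensor B x

@[simp] lemma cB_tmul (x : Module.Dual k g) (b : B) (y : g) :
    cB k g B x (b ⊗ₜ[k] y) = x y • b := by
  simp [cB]

lemma cB_add_fun (x x' : Module.Dual k g) (w : TensorProduct k B g) :
    cB k g B (x + x') w = cB k g B x w + cB k g B x' w := by
  simp [cB, LinearMap.lTensor_add]

lemma cB_smul_fun (t : k) (x : Module.Dual k g) (w : TensorProduct k B g) :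
    cB k g B (t • x) w = t • cB k g B x w := by
  simp [cB, LinearMap.lTensor_smul]

lemma sum_dual_smul (y : g) : (∑ s : Fin r, e.dualBasis s y • e s) = y := by
  simp only [Module.Basis.dualBasis_apply]
  exact e.sum_repr y

lemma cB_expand (w : TensorProduct k B g) :
    (∑ s : Fin r, cB k g B (e.dualBasis s) w ⊗ₜ[k] e s) = w := by
  induction w with
  | zero => simp
  | tmul b y =>
      simp only [cB_tmul]
      calc (∑ s : Fin r, (e.dualBasis s y • b) ⊗ₜ[k] e s)
          = ∑ s : Fin r, b ⊗ₜ[k] (e.dualBasis s y • e s) := by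
            refine Finset.sum_congr rfl fun s _ => ?_
            rw [TensorProduct.smul_tmul]
        _ = b ⊗ₜ[k] (∑ s : Fin r, e.dualBasis s y • e s) := by
            rw [TensorProduct.tmul_sum]
        _ = b ⊗ₜ[k] y := by rw [sum_dual_smul]
  | add w₁ w₂ h₁ h₂ =>
      simp only [map_add, TensorProduct.add_tmul, Finset.sum_add_distrib, h₁, h₂]

lemma cB_sum_coord (b : Fin r → B) (t : Fin r) :
    cB k g B (e.dualBasis t) (∑ s : Fin r, b s ⊗ₜ[k] e s) = b t := by
  rw [map_sum]
  simp [Module.Basis.dualBasis_apply_self, ite_smul]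

lemma cB_lie_sum (x : Module.Dual k g) (b c : Fin r → B) :
    cB k g B x ⁅∑ s : Fin r, b s ⊗ₜ[k] e s, ∑ t : Fin r, c t ⊗ₜ[k] e t⁆ =
      ∑ s : Fin r, ∑ t : Fin r, x ⁅e s, e t⁆ • (b s * c t) := by
  rw [sum_lie', map_sum]
  refine Finset.sum_congr rfl fun s _ => ?_
  rw [lie_sum', map_sum]
  refine Finset.sum_congr rfl fun t _ => ?_
  rw [LieAlgebra.ExtendScalars.bracket_tmul, cB_tmul]

lemma cB_lie (x : Module.Dual k g) (w w' : TensorProduct k B g) :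
    cB k g B x ⁅w, w'⁆ =
      ∑ s : Fin r, ∑ t : Fin r,
        x ⁅e s, e t⁆ • (cB k g B (e.dualBasis s) w * cB k g B (e.dualBasis t) w') := by
  conv_lhs => rw [← cB_expand k g r e B w, ← cB_expand k g r e B w']
  exact cB_lie_sum k g r e B x _ _

end Aux

section Construct

variable (B : Type u) [CommRing B] [Algebra k B]

/-- The linear map `g* ⊗ a → B` induced by a Lie algebra map `φ : a → B ⊗ g`. -/
def Lmap (φ : a →ₗ⁅k⁆ TensorProduct k B g) : Wspace k g a →ₗ[k] B :=
  TensorProduct.lift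
    { toFun := fun x => (cB k g B x) ∘ₗ φ.toLinearMap
      map_add' := fun x x' => by
        ext ξ; simp [cB_add_fun]
      map_smul' := fun t x => by
        ext ξ; simp [cB_smul_fun] }

@[simp] lemma Lmap_tmul (φ : a →ₗ⁅k⁆ TensorProduct k B g) (x : Module.Dual k g) (ξ : a) :
    Lmap k g a B φ (x ⊗ₜ[k] ξ) = cB k g B x (φ ξ) := rfl

lemma lift_respects (φ : a →ₗ⁅k⁆ TensorProduct k B g) :
    ∀ ⦃u v : TensorAlgebra k (Wspace k g a)⦄, Jrel k g a r e u v →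
      TensorAlgebra.lift k (Lmap k g a B φ) u = TensorAlgebra.lift k (Lmap k g a B φ) v := by
  intro u v h
  induction h with
  | comm u v => simp [mul_comm]
  | lie x ξ η =>
      simp only [ιW, TensorAlgebra.lift_ι_apply, map_sum, map_smul, map_mul, Lmap_tmul]
      rw [φ.map_lie]
      exact cB_lie k g r e B x (φ ξ) (φ η)

/-- The algebra map `a_g → B` induced by a Lie algebra map `φ : a → B ⊗ g`. -/
def fOf (φ : a →ₗ⁅k⁆ TensorProduct k B g) : RepAlg k g a r e →ₐ[k] B :=
  RingQuot.liftAlgHom k ⟨TensorAlgebra.lift k (Lmap k g a B φ), lift_respects k g a r e B φ⟩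

@[simp] lemma fOf_mk_ι (φ : a →ₗ⁅k⁆ TensorProduct k B g) (w : Wspace k g a) :
    fOf k g a r e B φ (mkR k g a r e (ιW k g a w)) = Lmap k g a B φ w := by
  rw [mkR, fOf, RingQuot.liftAlgHom_mkAlgHom_apply, ιW, TensorAlgebra.lift_ι_apply]

end Construct

theorem statement_10 (B : Type u) [CommRing B] [Algebra k B] :
    Function.Injective (Θ k g a r e B) ∧
    Set.range (Θ k g a r e B) =
      {F : a → TensorProduct k B g | ∃ φ : a →ₗ⁅k⁆ TensorProduct k B g, ⇑φ = F} ∧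
    (∀ (B' : Type u) [CommRing B'] [Algebra k B'] (ψ : B →ₐ[k] B')
        (f : RepAlg k g a r e →ₐ[k] B),
      Θ k g a r e B' (ψ.comp f) =
        fun ξ => TensorProduct.map ψ.toLinearMap LinearMap.id (Θ k g a r e B f ξ)) := by
  refine ⟨?_, ?_, ?_⟩
  · -- Injectivity
    intro f f' h
    have hcoord : ∀ (s : Fin r) (ξ : a),
        f (mkR k g a r e (ιW k g a (e.dualBasis s ⊗ₜ[k] ξ))) =
        f' (mkR k g a r e (ιW k g a (e.dualBasis s ⊗ₜ[k] ξ))) := by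
      intro s ξ
      have h1 := congrFun h ξ
      simp only [Θ] at h1
      have h2 := congrArg (cB k g B (e.dualBasis s)) h1
      rwa [cB_sum_coord k g r e B, cB_sum_coord k g r e B] at h2
    have hgen : ∀ w : Wspace k g a,
        f (mkR k g a r e (ιW k g a w)) = f' (mkR k g a r e (ιW k g a w)) := by
      intro w
      induction w using TensorProduct.induction_on with
      | zero => simp
      | tmul x ξ =>
          have hx : x = ∑ s : Fin r, x (e s) • e.dualBasis s := by
            conv_lhs => rw [← e.dualBasis.sum_repr x]
            simp [Module.Basis.dualBasis_repr]
          rw [hx]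
          simp only [TensorProduct.sum_tmul, ← TensorProduct.smul_tmul', map_sum, map_smul]
          exact Finset.sum_congr rfl fun s _ => by rw [hcoord]
      | add w₁ w₂ h₁ h₂ => simp [map_add, h₁, h₂]
    refine AlgHom.ext fun z => ?_
    obtain ⟨y, rfl⟩ := RingQuot.mkAlgHom_surjective k (Jrel k g a r e) z
    change f (mkR k g a r e y) = f' (mkR k g a r e y)
    induction y using TensorAlgebra.induction with
    | algebraMap t => simp only [AlgHom.commutes]
    | ι w => exact hgen w
    | mul u v hu hv => simp [map_mul, hu, hv]
    | add u v hu hv => simp [map_add, hu, hv]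
  · -- Range
    ext F
    constructor
    · rintro ⟨f, rfl⟩
      refine ⟨{ toFun := Θ k g a r e B f
                map_add' := fun ξ η => by
                  simp [Θ, TensorProduct.tmul_add, map_add, TensorProduct.add_tmul,
                    Finset.sum_add_distrib]
                map_smul' := fun t ξ => by
                  simp only [Θ, RingHom.id_apply, Finset.smul_sum]
                  refine Finset.sum_congr rfl fun s _ => ?_
                  rw [TensorProduct.tmul_smul, map_smul, map_smul, map_smul,
                    TensorProduct.smul_tmul']
                map_lie' := fun {ξ η} => ?_ }, rfl⟩
      show Θ k g a r e B f ⁅ξ, η⁆ = ⁅Θ k g a r e B f ξ, Θ k g a r e B f η⁆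
      have hrel : ∀ s : Fin r,
          f (mkR k g a r e (ιW k g a (e.dualBasis s ⊗ₜ[k] ⁅ξ, η⁆))) =
          ∑ u : Fin r, ∑ v : Fin r, e.dualBasis s ⁅e u, e v⁆ •
            (f (mkR k g a r e (ιW k g a (e.dualBasis u ⊗ₜ[k] ξ))) *
             f (mkR k g a r e (ιW k g a (e.dualBasis v ⊗ₜ[k] η)))) := by
        intro s
        have := RingQuot.mkAlgHom_rel k (Jrel.lie (k := k) (g := g) (a := a)
          (r := r) (e := e) (e.dualBasis s) ξ η)
        rw [show RingQuot.mkAlgHom k (Jrel k g a r e) = mkR k g a r e from rfl] at this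
        rw [this]
        simp [map_sum, map_smul, map_mul]
      set F : Fin r → B := fun u => f (mkR k g a r e (ιW k g a (e.dualBasis u ⊗ₜ[k] ξ)))
      set G : Fin r → B := fun v => f (mkR k g a r e (ιW k g a (e.dualBasis v ⊗ₜ[k] η)))
      calc Θ k g a r e B f ⁅ξ, η⁆
          = ∑ s : Fin r, (∑ u : Fin r, ∑ v : Fin r,
              e.dualBasis s ⁅e u, e v⁆ • (F u * G v)) ⊗ₜ[k] e s := by
            simp only [Θ]
            exact Finset.sum_congr rfl fun s _ => by rw [hrel s]
        _ = ∑ u : Fin r, ∑ v : Fin r,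
              (F u * G v) ⊗ₜ[k] (∑ s : Fin r, e.dualBasis s ⁅e u, e v⁆ • e s) := by
            simp only [TensorProduct.sum_tmul, TensorProduct.tmul_sum]
            rw [Finset.sum_comm]
            refine Finset.sum_congr rfl fun u _ => ?_
            rw [Finset.sum_comm]
            refine Finset.sum_congr rfl fun v _ => ?_
            refine Finset.sum_congr rfl fun s _ => ?_
            rw [TensorProduct.smul_tmul]
        _ = ∑ u : Fin r, ∑ v : Fin r, (F u * G v) ⊗ₜ[k] ⁅e u, e v⁆ := by
            refine Finset.sum_congr rfl fun u _ => Finset.sum_congr rfl fun v _ => ?_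
            rw [sum_dual_smul]
        _ = ⁅Θ k g a r e B f ξ, Θ k g a r e B f η⁆ := by
            simp only [Θ]
            rw [sum_lie']
            refine (Finset.sum_congr rfl fun u _ => ?_).symm
            rw [lie_sum']
            exact Finset.sum_congr rfl fun v _ => rfl
    · rintro ⟨φ, rfl⟩
      refine ⟨fOf k g a r e B φ, ?_⟩
      funext ξ
      show Θ k g a r e B (fOf k g a r e B φ) ξ = φ ξ
      simp only [Θ, fOf_mk_ι, Lmap_tmul]
      exact cB_expand k g r e B (φ ξ)
  · -- Naturality
    intro B' _ _ ψ f
    funext ξ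
    simp only [Θ, AlgHom.coe_comp, Function.comp_apply, map_sum, TensorProduct.map_tmul]
    rfl

end
end

section
/- The S_2-invariant subalgebra of the graded-commutative algebra ℚ[x_1, x_2, y_1, y_2] ⊗ Λ(θ_1, θ_2) is generated as a ℚ-algebra by the eight elements x_1 + x_2, y_1 + y_2, x_1 x_2, y_1 y_2, x_1 y_1 + x_2 y_2, θ_1 + θ_2, x_1 θ_1 + x_2 θ_2, and y_1 θ_1 + y_2 θ_2. In particular, the degree-zero invariant subalgebra ℚ[x_1, x_2, y_1, y_2]^{S_2} is generated by the first five of these elements. -/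
set_option synthInstance.maxHeartbeats 1000000
set_option maxHeartbeats 1000000


/-!
STATEMENT 13: The S_2-invariant subalgebra of ℚ[x_1,x_2,y_1,y_2] ⊗ Λ(θ_1,θ_2)
is generated as a ℚ-algebra by the eight elements
x_1+x_2, y_1+y_2, x_1x_2, y_1y_2, x_1y_1+x_2y_2, θ_1+θ_2, x_1θ_1+x_2θ_2, y_1θ_1+y_2θ_2;
and the degree-zero invariant subalgebra ℚ[x_1,x_2,y_1,y_2]^{S_2} is generated by the
first five of these.
-/

noncomputable section

open MvPolynomial TensorProduct

/-- The polynomial factor ℚ[x_1,x_2,y_1,y_2]: x-variables `Sum.inl i`,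
y-variables `Sum.inr i`. -/
abbrev Poly2 : Type := MvPolynomial (Fin 2 ⊕ Fin 2) ℚ

/-- `P = ℚ[x_1,x_2,y_1,y_2] ⊗ Λ(θ_1,θ_2)` with θ_i = ι(e_i). -/
abbrev P13 : Type := TensorProduct ℚ Poly2 (ExteriorAlgebra ℚ (Fin 2 → ℚ))

/-- The transposition on `Fin 2`. -/
def sw : Fin 2 → Fin 2 := ![1, 0]

/-- The swap action on the polynomial factor: x_1 ↔ x_2, y_1 ↔ y_2. -/
def swapPoly : Poly2 →ₐ[ℚ] Poly2 := MvPolynomial.rename (Sum.map sw sw)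

/-- The S_2-action on `P` simultaneously swapping x_1 ↔ x_2, y_1 ↔ y_2, θ_1 ↔ θ_2. -/
def swapAct : P13 →ₐ[ℚ] P13 :=
  Algebra.TensorProduct.map swapPoly (ExteriorAlgebra.map (LinearMap.funLeft ℚ ℚ sw))

def x₁ : Poly2 := MvPolynomial.X (Sum.inl 0)
def x₂ : Poly2 := MvPolynomial.X (Sum.inl 1)
def y₁ : Poly2 := MvPolynomial.X (Sum.inr 0)
def y₂ : Poly2 := MvPolynomial.X (Sum.inr 1)

def θ₁ : ExteriorAlgebra ℚ (Fin 2 → ℚ) := ExteriorAlgebra.ι ℚ (Pi.single 0 1)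
def θ₂ : ExteriorAlgebra ℚ (Fin 2 → ℚ) := ExteriorAlgebra.ι ℚ (Pi.single 1 1)

def A0 : Subalgebra ℚ Poly2 :=
  Algebra.adjoin ℚ ({x₁ + x₂, y₁ + y₂, x₁ * x₂, y₁ * y₂, x₁ * y₁ + x₂ * y₂} : Set Poly2)

lemma hu : x₁ + x₂ ∈ A0 := Algebra.subset_adjoin (by simp)
lemma hs : y₁ + y₂ ∈ A0 := Algebra.subset_adjoin (by simp)
lemma hp : x₁ * x₂ ∈ A0 := Algebra.subset_adjoin (by simp)
lemma hq : y₁ * y₂ ∈ A0 := Algebra.subset_adjoin (by simp)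
lemma he : x₁ * y₁ + x₂ * y₂ ∈ A0 := Algebra.subset_adjoin (by simp)

lemma sp_x₁ : swapPoly x₁ = x₂ := by
  simp [swapPoly, x₁, x₂, rename_X, sw]
lemma sp_x₂ : swapPoly x₂ = x₁ := by
  simp [swapPoly, x₁, x₂, rename_X, sw]
lemma sp_y₁ : swapPoly y₁ = y₂ := by
  simp [swapPoly, y₁, y₂, rename_X, sw]
lemma sp_y₂ : swapPoly y₂ = y₁ := by
  simp [swapPoly, y₁, y₂, rename_X, sw]

lemma sp_sp (f : Poly2) : swapPoly (swapPoly f) = f := by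
  have : (Sum.map sw sw) ∘ (Sum.map sw sw) = id := by
    funext i; cases i with
    | inl a => fin_cases a <;> simp [sw]
    | inr a => fin_cases a <;> simp [sw]
  simp only [swapPoly, MvPolynomial.rename_rename, this, MvPolynomial.rename_id, AlgHom.id_apply]

lemma twoStep (S : ℕ → Prop) (h0 : S 0) (h1 : S 1)
    (hrec : ∀ n, S n → S (n + 1) → S (n + 2)) : ∀ n, S n := by
  have h : ∀ n, S n ∧ S (n + 1) := by
    intro n
    induction n with
    | zero => exact ⟨h0, h1⟩
    | succ k ih => exact ⟨ih.2, hrec k ih.1 ih.2⟩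
  exact fun n => (h n).1

def πp (a c : ℕ) : Poly2 := x₁ ^ a * y₁ ^ c + x₂ ^ a * y₂ ^ c

lemma pi_mem : ∀ a c, πp a c ∈ A0 := by
  have base : ∀ c, πp 0 c ∈ A0 ∧ πp 1 c ∈ A0 := by
    refine twoStep (fun c => πp 0 c ∈ A0 ∧ πp 1 c ∈ A0) ?_ ?_ ?_
    · constructor
      · have : πp 0 0 = algebraMap ℚ Poly2 2 := by simp [πp, algebraMap_eq, map_ofNat]; ring
        rw [this]; exact Subalgebra.algebraMap_mem _ _
      · have : πp 1 0 = x₁ + x₂ := by simp [πp]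
        rw [this]; exact hu
    · constructor
      · have : πp 0 1 = y₁ + y₂ := by simp [πp]
        rw [this]; exact hs
      · have : πp 1 1 = x₁ * y₁ + x₂ * y₂ := by simp [πp]
        rw [this]; exact he
    · intro n ⟨h0a, h1a⟩ ⟨h0b, h1b⟩
      have r0 : πp 0 (n + 2) = (y₁ + y₂) * πp 0 (n + 1) - (y₁ * y₂) * πp 0 n := by
        simp only [πp]; ring
      have r1 : πp 1 (n + 2) = (y₁ + y₂) * πp 1 (n + 1) - (y₁ * y₂) * πp 1 n := by
        simp only [πp]; ring
      exact ⟨r0 ▸ sub_mem (mul_mem hs h0b) (mul_mem hq h0a),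
             r1 ▸ sub_mem (mul_mem hs h1b) (mul_mem hq h1a)⟩
  intro a c
  refine twoStep (fun a => πp a c ∈ A0) (base c).1 (base c).2 ?_ a
  intro n ha hb
  have r : πp (n + 2) c = (x₁ + x₂) * πp (n + 1) c - (x₁ * x₂) * πp n c := by
    simp only [πp]; ring
  exact r ▸ sub_mem (mul_mem hu hb) (mul_mem hp ha)

lemma S4 : ∀ a b c d : ℕ,
    x₁ ^ a * x₂ ^ b * y₁ ^ c * y₂ ^ d + x₁ ^ b * x₂ ^ a * y₁ ^ d * y₂ ^ c ∈ A0 := by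
  have main : ∀ b a' c d : ℕ,
      x₁ ^ (b + a') * x₂ ^ b * y₁ ^ c * y₂ ^ d
        + x₁ ^ b * x₂ ^ (b + a') * y₁ ^ d * y₂ ^ c ∈ A0 := by
    intro b a' c d
    rcases le_total d c with h | h
    · obtain ⟨c', rfl⟩ := le_iff_exists_add.mp h
      have : x₁ ^ (b + a') * x₂ ^ b * y₁ ^ (d + c') * y₂ ^ d
          + x₁ ^ b * x₂ ^ (b + a') * y₁ ^ d * y₂ ^ (d + c')
          = (x₁ * x₂) ^ b * (y₁ * y₂) ^ d * πp a' c' := by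
        simp only [πp]; ring
      rw [this]
      exact mul_mem (mul_mem (pow_mem hp b) (pow_mem hq d)) (pi_mem a' c')
    · obtain ⟨d', rfl⟩ := le_iff_exists_add.mp h
      have : x₁ ^ (b + a') * x₂ ^ b * y₁ ^ c * y₂ ^ (c + d')
          + x₁ ^ b * x₂ ^ (b + a') * y₁ ^ (c + d') * y₂ ^ c
          = (x₁ * x₂) ^ b * (y₁ * y₂) ^ c * (πp a' 0 * πp 0 d' - πp a' d') := by
        simp only [πp]; ring
      rw [this]
      exact mul_mem (mul_mem (pow_mem hp b) (pow_mem hq c))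
        (sub_mem (mul_mem (pi_mem a' 0) (pi_mem 0 d')) (pi_mem a' d'))
  intro a b c d
  rcases le_total b a with h | h
  · obtain ⟨a', rfl⟩ := le_iff_exists_add.mp h
    exact main b a' c d
  · obtain ⟨b', rfl⟩ := le_iff_exists_add.mp h
    rw [add_comm]
    exact main a b' d c

lemma mono_eq (u : (Fin 2 ⊕ Fin 2) →₀ ℕ) (a : ℚ) :
    (monomial u a : Poly2)
      = C a * (x₁ ^ u (.inl 0) * x₂ ^ u (.inl 1) * y₁ ^ u (.inr 0) * y₂ ^ u (.inr 1)) := by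
  rw [monomial_eq]
  congr 1
  rw [Finsupp.prod_fintype _ _ (fun i => pow_zero _)]
  rw [Fintype.prod_sum_type]
  simp only [Fin.prod_univ_two]
  simp only [x₁, x₂, y₁, y₂]
  ring

lemma sp_mono (u : (Fin 2 ⊕ Fin 2) →₀ ℕ) (a : ℚ) :
    swapPoly (monomial u a)
      = C a * (x₂ ^ u (.inl 0) * x₁ ^ u (.inl 1) * y₂ ^ u (.inr 0) * y₁ ^ u (.inr 1)) := by
  rw [mono_eq]
  simp only [map_mul, map_pow, sp_x₁, sp_x₂, sp_y₁, sp_y₂]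
  congr 1
  simp [swapPoly]

lemma sym_mem (f : Poly2) : f + swapPoly f ∈ A0 := by
  induction f using MvPolynomial.induction_on' with
  | monomial u a =>
    have h : (monomial u a : Poly2) + swapPoly (monomial u a)
        = C a * (x₁ ^ u (.inl 0) * x₂ ^ u (.inl 1) * y₁ ^ u (.inr 0) * y₂ ^ u (.inr 1)
            + x₁ ^ u (.inl 1) * x₂ ^ u (.inl 0) * y₁ ^ u (.inr 1) * y₂ ^ u (.inr 0)) := by
      rw [sp_mono, mono_eq]; ring
    rw [h]
    exact mul_mem (Subalgebra.algebraMap_mem A0 a) (S4 _ _ _ _)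
  | add p q hp hq =>
    have : p + q + swapPoly (p + q) = (p + swapPoly p) + (q + swapPoly q) := by
      rw [map_add]; ring
    rw [this]; exact add_mem hp hq

lemma inv_mem {f : Poly2} (hf : swapPoly f = f) : f ∈ A0 := by
  have h : f = (2⁻¹ : ℚ) • (f + swapPoly f) := by
    rw [hf, ← two_smul ℚ f, smul_smul]; norm_num
  rw [h]
  exact Subalgebra.smul_mem _ (sym_mem f) _

lemma DX : ∀ n : ℕ, ∃ R, R ∈ A0 ∧ x₁ ^ n - x₂ ^ n = R * (x₁ - x₂) := by
  refine twoStep (fun n => ∃ R, R ∈ A0 ∧ x₁ ^ n - x₂ ^ n = R * (x₁ - x₂)) ?_ ?_ ?_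
  · exact ⟨0, zero_mem _, by simp⟩
  · exact ⟨1, one_mem _, by simp⟩
  · rintro n ⟨R0, hR0, h0⟩ ⟨R1, hR1, h1⟩
    refine ⟨(x₁ + x₂) * R1 - (x₁ * x₂) * R0, sub_mem (mul_mem hu hR1) (mul_mem hp hR0), ?_⟩
    have : x₁ ^ (n + 2) - x₂ ^ (n + 2)
        = (x₁ + x₂) * (x₁ ^ (n + 1) - x₂ ^ (n + 1)) - (x₁ * x₂) * (x₁ ^ n - x₂ ^ n) := by ring
    rw [this, h0, h1]; ring

lemma DY : ∀ n : ℕ, ∃ R, R ∈ A0 ∧ y₁ ^ n - y₂ ^ n = R * (y₁ - y₂) := by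
  refine twoStep (fun n => ∃ R, R ∈ A0 ∧ y₁ ^ n - y₂ ^ n = R * (y₁ - y₂)) ?_ ?_ ?_
  · exact ⟨0, zero_mem _, by simp⟩
  · exact ⟨1, one_mem _, by simp⟩
  · rintro n ⟨R0, hR0, h0⟩ ⟨R1, hR1, h1⟩
    refine ⟨(y₁ + y₂) * R1 - (y₁ * y₂) * R0, sub_mem (mul_mem hs hR1) (mul_mem hq hR0), ?_⟩
    have : y₁ ^ (n + 2) - y₂ ^ (n + 2)
        = (y₁ + y₂) * (y₁ ^ (n + 1) - y₂ ^ (n + 1)) - (y₁ * y₂) * (y₁ ^ n - y₂ ^ n) := by ring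
    rw [this, h0, h1]; ring

lemma DXab (a b : ℕ) : ∃ R, R ∈ A0 ∧ x₁ ^ a * x₂ ^ b - x₁ ^ b * x₂ ^ a = R * (x₁ - x₂) := by
  rcases le_total b a with h | h
  · obtain ⟨k, rfl⟩ := le_iff_exists_add.mp h
    obtain ⟨R, hR, hk⟩ := DX k
    refine ⟨(x₁ * x₂) ^ b * R, mul_mem (pow_mem hp b) hR, ?_⟩
    have : x₁ ^ (b + k) * x₂ ^ b - x₁ ^ b * x₂ ^ (b + k)
        = (x₁ * x₂) ^ b * (x₁ ^ k - x₂ ^ k) := by ring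
    rw [this, hk]; ring
  · obtain ⟨k, rfl⟩ := le_iff_exists_add.mp h
    obtain ⟨R, hR, hk⟩ := DX k
    refine ⟨-((x₁ * x₂) ^ a * R), neg_mem (mul_mem (pow_mem hp a) hR), ?_⟩
    have : x₁ ^ a * x₂ ^ (a + k) - x₁ ^ (a + k) * x₂ ^ a
        = -((x₁ * x₂) ^ a * (x₁ ^ k - x₂ ^ k)) := by ring
    rw [this, hk]; ring

lemma DYab (a b : ℕ) : ∃ R, R ∈ A0 ∧ y₁ ^ a * y₂ ^ b - y₁ ^ b * y₂ ^ a = R * (y₁ - y₂) := by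
  rcases le_total b a with h | h
  · obtain ⟨k, rfl⟩ := le_iff_exists_add.mp h
    obtain ⟨R, hR, hk⟩ := DY k
    refine ⟨(y₁ * y₂) ^ b * R, mul_mem (pow_mem hq b) hR, ?_⟩
    have : y₁ ^ (b + k) * y₂ ^ b - y₁ ^ b * y₂ ^ (b + k)
        = (y₁ * y₂) ^ b * (y₁ ^ k - y₂ ^ k) := by ring
    rw [this, hk]; ring
  · obtain ⟨k, rfl⟩ := le_iff_exists_add.mp h
    obtain ⟨R, hR, hk⟩ := DY k
    refine ⟨-((y₁ * y₂) ^ a * R), neg_mem (mul_mem (pow_mem hq a) hR), ?_⟩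
    have : y₁ ^ a * y₂ ^ (a + k) - y₁ ^ (a + k) * y₂ ^ a
        = -((y₁ * y₂) ^ a * (y₁ ^ k - y₂ ^ k)) := by ring
    rw [this, hk]; ring

lemma symx (a b : ℕ) : x₁ ^ a * x₂ ^ b + x₁ ^ b * x₂ ^ a ∈ A0 := by
  have h := sym_mem (x₁ ^ a * x₂ ^ b)
  simpa [map_mul, map_pow, sp_x₁, sp_x₂, mul_comm, add_comm] using h

lemma symy (a b : ℕ) : y₁ ^ a * y₂ ^ b + y₁ ^ b * y₂ ^ a ∈ A0 := by
  have h := sym_mem (y₁ ^ a * y₂ ^ b)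
  simpa [map_mul, map_pow, sp_y₁, sp_y₂, mul_comm, add_comm] using h

lemma anti (f : Poly2) :
    ∃ P Q, P ∈ A0 ∧ Q ∈ A0 ∧ f - swapPoly f = P * (x₁ - x₂) + Q * (y₁ - y₂) := by
  induction f using MvPolynomial.induction_on' with
  | monomial u a =>
    set A := x₁ ^ u (.inl 0) * x₂ ^ u (.inl 1) with hA
    set A' := x₁ ^ u (.inl 1) * x₂ ^ u (.inl 0) with hA'
    set B := y₁ ^ u (.inr 0) * y₂ ^ u (.inr 1) with hB
    set B' := y₁ ^ u (.inr 1) * y₂ ^ u (.inr 0) with hB'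
    obtain ⟨R, hR, hRx⟩ := DXab (u (.inl 0)) (u (.inl 1))
    obtain ⟨S, hS, hSy⟩ := DYab (u (.inr 0)) (u (.inr 1))
    refine ⟨(2⁻¹ : ℚ) • (C a * R * (B + B')), (2⁻¹ : ℚ) • (C a * (A + A') * S),
      Subalgebra.smul_mem _ (mul_mem (mul_mem (Subalgebra.algebraMap_mem A0 a) hR)
        (symy _ _)) _,
      Subalgebra.smul_mem _ (mul_mem (mul_mem (Subalgebra.algebraMap_mem A0 a)
        (symx _ _)) hS) _, ?_⟩
    have hm : (monomial u a : Poly2) - swapPoly (monomial u a)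
        = C a * (A * B) - C a * (A' * B') := by
      rw [sp_mono, mono_eq, hA, hA', hB, hB']; ring
    rw [hm, smul_mul_assoc, smul_mul_assoc, ← smul_add, eq_comm,
      inv_smul_eq_iff₀ (two_ne_zero), two_smul ℚ]
    linear_combination (-(C a * (B + B'))) * hRx - (C a * (A + A')) * hSy
  | add p q hps hqs =>
    obtain ⟨P1, Q1, hP1, hQ1, h1⟩ := hps
    obtain ⟨P2, Q2, hP2, hQ2, h2⟩ := hqs
    refine ⟨P1 + P2, Q1 + Q2, add_mem hP1 hP2, add_mem hQ1 hQ2, ?_⟩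
    rw [map_add]
    linear_combination h1 + h2

abbrev Λ2 := ExteriorAlgebra ℚ (Fin 2 → ℚ)

lemma t11 : θ₁ * θ₁ = 0 := ExteriorAlgebra.ι_sq_zero _
lemma t22 : θ₂ * θ₂ = 0 := ExteriorAlgebra.ι_sq_zero _
lemma t21 : θ₂ * θ₁ = -(θ₁ * θ₂) :=
  eq_neg_of_add_eq_zero_left (ExteriorAlgebra.ι_add_mul_swap _ _)
lemma t112 : θ₁ * (θ₁ * θ₂) = 0 := by rw [← mul_assoc, t11, zero_mul]
lemma t212 : θ₂ * (θ₁ * θ₂) = 0 := by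
  rw [← mul_assoc, t21, neg_mul, mul_assoc, t22, mul_zero, neg_zero]
lemma t121 : θ₁ * θ₂ * θ₁ = 0 := by rw [mul_assoc, t21, mul_neg, t112, neg_zero]
lemma t122 : θ₁ * θ₂ * θ₂ = 0 := by rw [mul_assoc, t22, mul_zero]
lemma t1212 : (θ₁ * θ₂) * (θ₁ * θ₂) = 0 := by rw [← mul_assoc, t121, zero_mul]

def Em : Λ2 →ₐ[ℚ] Λ2 := ExteriorAlgebra.map (LinearMap.funLeft ℚ ℚ sw)

lemma single_sw0 : (LinearMap.funLeft ℚ ℚ sw) (Pi.single 0 1 : Fin 2 → ℚ) = Pi.single 1 1 := by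
  funext i
  fin_cases i <;> simp [LinearMap.funLeft_apply, sw, Pi.single_apply]

lemma single_sw1 : (LinearMap.funLeft ℚ ℚ sw) (Pi.single 1 1 : Fin 2 → ℚ) = Pi.single 0 1 := by
  funext i
  fin_cases i <;> simp [LinearMap.funLeft_apply, sw, Pi.single_apply]

lemma Em_θ₁ : Em θ₁ = θ₂ := by
  rw [Em, θ₁, ExteriorAlgebra.map_apply_ι, single_sw0]; rfl
lemma Em_θ₂ : Em θ₂ = θ₁ := by
  rw [Em, θ₂, ExteriorAlgebra.map_apply_ι, single_sw1]; rfl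
lemma Em_θ₁₂ : Em (θ₁ * θ₂) = -(θ₁ * θ₂) := by
  rw [map_mul, Em_θ₁, Em_θ₂, t21]

lemma lspan (t : Λ2) : ∃ a b c d : ℚ, t = a • 1 + b • θ₁ + c • θ₂ + d • (θ₁ * θ₂) := by
  induction t using ExteriorAlgebra.induction with
  | algebraMap r => exact ⟨r, 0, 0, 0, by simp [Algebra.algebraMap_eq_smul_one]⟩
  | ι v =>
    refine ⟨0, v 0, v 1, 0, ?_⟩
    have hv : v = v 0 • (Pi.single 0 1 : Fin 2 → ℚ) + v 1 • (Pi.single 1 1 : Fin 2 → ℚ) := by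
      funext i; fin_cases i <;> simp [Pi.single_apply]
    rw [hv, map_add, map_smul, map_smul]
    simp [θ₁, θ₂]
  | mul u w hu' hw' =>
    obtain ⟨a1, b1, c1, d1, rfl⟩ := hu'
    obtain ⟨a2, b2, c2, d2, rfl⟩ := hw'
    refine ⟨a1 * a2, a1 * b2 + b1 * a2, a1 * c2 + c1 * a2,
      a1 * d2 + d1 * a2 + b1 * c2 - c1 * b2, ?_⟩
    simp only [add_mul, mul_add, smul_mul_assoc, mul_smul_comm, one_mul, mul_one,
      t11, t22, t21, t112, t212, t121, t122, t1212, smul_neg, smul_zero,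
      add_zero, zero_add, smul_smul]
    module
  | add u w hu' hw' =>
    obtain ⟨a1, b1, c1, d1, rfl⟩ := hu'
    obtain ⟨a2, b2, c2, d2, rfl⟩ := hw'
    exact ⟨a1 + a2, b1 + b2, c1 + c2, d1 + d2, by module⟩

def A1 : Subalgebra ℚ P13 :=
  Algebra.adjoin ℚ
    ({(x₁ + x₂) ⊗ₜ[ℚ] 1, (y₁ + y₂) ⊗ₜ[ℚ] 1, (x₁ * x₂) ⊗ₜ[ℚ] 1, (y₁ * y₂) ⊗ₜ[ℚ] 1,
      (x₁ * y₁ + x₂ * y₂) ⊗ₜ[ℚ] 1, (1 : Poly2) ⊗ₜ[ℚ] (θ₁ + θ₂),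
      x₁ ⊗ₜ[ℚ] θ₁ + x₂ ⊗ₜ[ℚ] θ₂, y₁ ⊗ₜ[ℚ] θ₁ + y₂ ⊗ₜ[ℚ] θ₂} : Set P13)

lemma g6 : (1 : Poly2) ⊗ₜ[ℚ] (θ₁ + θ₂) ∈ A1 := Algebra.subset_adjoin (by simp)
lemma g7 : x₁ ⊗ₜ[ℚ] θ₁ + x₂ ⊗ₜ[ℚ] θ₂ ∈ A1 := Algebra.subset_adjoin (by simp)
lemma g8 : y₁ ⊗ₜ[ℚ] θ₁ + y₂ ⊗ₜ[ℚ] θ₂ ∈ A1 := Algebra.subset_adjoin (by simp)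

lemma A0_map {f : Poly2} (hf : f ∈ A0) : (f ⊗ₜ[ℚ] 1 : P13) ∈ A1 := by
  induction hf using Algebra.adjoin_induction with
  | mem x hx =>
    rcases hx with rfl | rfl | rfl | rfl | rfl
    · exact Algebra.subset_adjoin (by simp)
    · exact Algebra.subset_adjoin (by simp)
    · exact Algebra.subset_adjoin (by simp)
    · exact Algebra.subset_adjoin (by simp)
    · exact Algebra.subset_adjoin (by simp)
  | algebraMap r =>
    have : ((algebraMap ℚ Poly2 r) ⊗ₜ[ℚ] (1 : Λ2) : P13) = algebraMap ℚ P13 r := by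
      rw [Algebra.TensorProduct.algebraMap_apply]
    rw [this]; exact Subalgebra.algebraMap_mem _ _
  | add a b _ _ ha hb =>
    rw [add_tmul]; exact add_mem ha hb
  | mul a b _ _ ha hb =>
    have : ((a * b) ⊗ₜ[ℚ] (1 : Λ2) : P13) = (a ⊗ₜ[ℚ] 1) * (b ⊗ₜ[ℚ] 1) := by
      rw [Algebra.TensorProduct.tmul_mul_tmul, one_mul]
    rw [this]; exact mul_mem ha hb

lemma tdecomp (z : P13) : ∃ f0 f1 f2 g : Poly2,
    z = f0 ⊗ₜ[ℚ] 1 + f1 ⊗ₜ[ℚ] θ₁ + f2 ⊗ₜ[ℚ] θ₂ + g ⊗ₜ[ℚ] (θ₁ * θ₂) := by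
  induction z using TensorProduct.induction_on with
  | zero => exact ⟨0, 0, 0, 0, by simp⟩
  | tmul f t =>
    obtain ⟨a, b, c, d, rfl⟩ := lspan t
    exact ⟨a • f, b • f, c • f, d • f, by
      rw [tmul_add, tmul_add, tmul_add, tmul_smul, tmul_smul, tmul_smul, tmul_smul,
        smul_tmul', smul_tmul', smul_tmul', smul_tmul']⟩
  | add u w hu' hw' =>
    obtain ⟨a1, b1, c1, d1, rfl⟩ := hu'
    obtain ⟨a2, b2, c2, d2, rfl⟩ := hw'
    exact ⟨a1 + a2, b1 + b2, c1 + c2, d1 + d2, by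
      rw [add_tmul, add_tmul, add_tmul, add_tmul]; abel⟩

lemma sAct_tmul (f : Poly2) (t : Λ2) : swapAct (f ⊗ₜ[ℚ] t) = swapPoly f ⊗ₜ[ℚ] Em t :=
  rfl

lemma sθ₁ : (θ₁ + θ₂) * θ₁ = -(θ₁ * θ₂) := by rw [add_mul, t11, t21, zero_add]
lemma sθ₂ : (θ₁ + θ₂) * θ₂ = θ₁ * θ₂ := by rw [add_mul, t22, add_zero]

lemma Lanti_x : ((x₁ - x₂) ⊗ₜ[ℚ] (θ₁ * θ₂) : P13) ∈ A1 := by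
  have key : ((x₁ - x₂) ⊗ₜ[ℚ] (θ₁ * θ₂) : P13)
      = -(((1 : Poly2) ⊗ₜ[ℚ] (θ₁ + θ₂)) * (x₁ ⊗ₜ[ℚ] θ₁ + x₂ ⊗ₜ[ℚ] θ₂)) := by
    rw [mul_add, Algebra.TensorProduct.tmul_mul_tmul, Algebra.TensorProduct.tmul_mul_tmul,
      one_mul, one_mul, sθ₁, sθ₂, tmul_neg, sub_tmul]
    abel
  rw [key]; exact neg_mem (mul_mem g6 g7)

lemma Lanti_y : ((y₁ - y₂) ⊗ₜ[ℚ] (θ₁ * θ₂) : P13) ∈ A1 := by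
  have key : ((y₁ - y₂) ⊗ₜ[ℚ] (θ₁ * θ₂) : P13)
      = -(((1 : Poly2) ⊗ₜ[ℚ] (θ₁ + θ₂)) * (y₁ ⊗ₜ[ℚ] θ₁ + y₂ ⊗ₜ[ℚ] θ₂)) := by
    rw [mul_add, Algebra.TensorProduct.tmul_mul_tmul, Algebra.TensorProduct.tmul_mul_tmul,
      one_mul, one_mul, sθ₁, sθ₂, tmul_neg, sub_tmul]
    abel
  rw [key]; exact neg_mem (mul_mem g6 g8)

lemma Ldiff_x : ((x₁ - x₂) ⊗ₜ[ℚ] (θ₁ - θ₂) : P13) ∈ A1 := by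
  have key : ((x₁ - x₂) ⊗ₜ[ℚ] (θ₁ - θ₂) : P13)
      = (2 : ℚ) • (x₁ ⊗ₜ[ℚ] θ₁ + x₂ ⊗ₜ[ℚ] θ₂)
        - ((x₁ + x₂) ⊗ₜ[ℚ] (1 : Λ2)) * ((1 : Poly2) ⊗ₜ[ℚ] (θ₁ + θ₂)) := by
    rw [Algebra.TensorProduct.tmul_mul_tmul, one_mul, mul_one, sub_tmul, tmul_sub, tmul_sub,
      add_tmul, tmul_add, tmul_add]
    module
  rw [key]
  exact sub_mem (Subalgebra.smul_mem _ g7 _)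
    (mul_mem (A0_map hu) g6)

lemma Ldiff_y : ((y₁ - y₂) ⊗ₜ[ℚ] (θ₁ - θ₂) : P13) ∈ A1 := by
  have key : ((y₁ - y₂) ⊗ₜ[ℚ] (θ₁ - θ₂) : P13)
      = (2 : ℚ) • (y₁ ⊗ₜ[ℚ] θ₁ + y₂ ⊗ₜ[ℚ] θ₂)
        - ((y₁ + y₂) ⊗ₜ[ℚ] (1 : Λ2)) * ((1 : Poly2) ⊗ₜ[ℚ] (θ₁ + θ₂)) := by
    rw [Algebra.TensorProduct.tmul_mul_tmul, one_mul, mul_one, sub_tmul, tmul_sub, tmul_sub,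
      add_tmul, tmul_add, tmul_add]
    module
  rw [key]
  exact sub_mem (Subalgebra.smul_mem _ g8 _)
    (mul_mem (A0_map hs) g6)

lemma L3 (g : Poly2) : ((g - swapPoly g) ⊗ₜ[ℚ] (θ₁ * θ₂) : P13) ∈ A1 := by
  obtain ⟨P, Q, hP, hQ, hg⟩ := anti g
  rw [hg, add_tmul]
  have h1 : ((P * (x₁ - x₂)) ⊗ₜ[ℚ] (θ₁ * θ₂) : P13)
      = (P ⊗ₜ[ℚ] 1) * ((x₁ - x₂) ⊗ₜ[ℚ] (θ₁ * θ₂)) := by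
    rw [Algebra.TensorProduct.tmul_mul_tmul, one_mul]
  have h2 : ((Q * (y₁ - y₂)) ⊗ₜ[ℚ] (θ₁ * θ₂) : P13)
      = (Q ⊗ₜ[ℚ] 1) * ((y₁ - y₂) ⊗ₜ[ℚ] (θ₁ * θ₂)) := by
    rw [Algebra.TensorProduct.tmul_mul_tmul, one_mul]
  rw [h1, h2]
  exact add_mem (mul_mem (A0_map hP) Lanti_x) (mul_mem (A0_map hQ) Lanti_y)

lemma Ldiff (g : Poly2) : ((g - swapPoly g) ⊗ₜ[ℚ] (θ₁ - θ₂) : P13) ∈ A1 := by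
  obtain ⟨P, Q, hP, hQ, hg⟩ := anti g
  rw [hg, add_tmul]
  have h1 : ((P * (x₁ - x₂)) ⊗ₜ[ℚ] (θ₁ - θ₂) : P13)
      = (P ⊗ₜ[ℚ] 1) * ((x₁ - x₂) ⊗ₜ[ℚ] (θ₁ - θ₂)) := by
    rw [Algebra.TensorProduct.tmul_mul_tmul, one_mul]
  have h2 : ((Q * (y₁ - y₂)) ⊗ₜ[ℚ] (θ₁ - θ₂) : P13)
      = (Q ⊗ₜ[ℚ] 1) * ((y₁ - y₂) ⊗ₜ[ℚ] (θ₁ - θ₂)) := by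
    rw [Algebra.TensorProduct.tmul_mul_tmul, one_mul]
  rw [h1, h2]
  exact add_mem (mul_mem (A0_map hP) Ldiff_x) (mul_mem (A0_map hQ) Ldiff_y)

lemma L2 (h : Poly2) : (h ⊗ₜ[ℚ] θ₁ + (swapPoly h) ⊗ₜ[ℚ] θ₂ : P13) ∈ A1 := by
  have key : (h ⊗ₜ[ℚ] θ₁ + (swapPoly h) ⊗ₜ[ℚ] θ₂ : P13)
      = (2⁻¹ : ℚ) • (((h + swapPoly h) ⊗ₜ[ℚ] (1 : Λ2)) * ((1 : Poly2) ⊗ₜ[ℚ] (θ₁ + θ₂))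
          + ((h - swapPoly h) ⊗ₜ[ℚ] (θ₁ - θ₂))) := by
    rw [Algebra.TensorProduct.tmul_mul_tmul, one_mul, mul_one, add_tmul, sub_tmul,
      tmul_add, tmul_add, tmul_sub, tmul_sub]
    module
  rw [key]
  exact Subalgebra.smul_mem _
    (add_mem (mul_mem (A0_map (sym_mem h)) g6) (Ldiff h)) _

lemma part2 : AlgHom.equalizer swapPoly (AlgHom.id ℚ Poly2)
    = Algebra.adjoin ℚ ({x₁ + x₂, y₁ + y₂, x₁ * x₂, y₁ * y₂, x₁ * y₁ + x₂ * y₂} : Set Poly2) := by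
  apply le_antisymm
  · intro f hf
    rw [AlgHom.mem_equalizer] at hf
    exact inv_mem (hf.trans rfl)
  · rw [Algebra.adjoin_le_iff]
    rintro g (rfl | rfl | rfl | rfl | rfl)
    · rw [SetLike.mem_coe, AlgHom.mem_equalizer, map_add, sp_x₁, sp_x₂, AlgHom.id_apply, add_comm]
    · rw [SetLike.mem_coe, AlgHom.mem_equalizer, map_add, sp_y₁, sp_y₂, AlgHom.id_apply, add_comm]
    · rw [SetLike.mem_coe, AlgHom.mem_equalizer, map_mul, sp_x₁, sp_x₂, AlgHom.id_apply, mul_comm]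
    · rw [SetLike.mem_coe, AlgHom.mem_equalizer, map_mul, sp_y₁, sp_y₂, AlgHom.id_apply, mul_comm]
    · rw [SetLike.mem_coe, AlgHom.mem_equalizer, map_add, map_mul, map_mul,
        sp_x₁, sp_x₂, sp_y₁, sp_y₂, AlgHom.id_apply, add_comm]

lemma part1 : AlgHom.equalizer swapAct (AlgHom.id ℚ P13) = A1 := by
  apply le_antisymm
  · intro z hz
    rw [AlgHom.mem_equalizer, AlgHom.id_apply] at hz
    obtain ⟨f0, f1, f2, g, hzd⟩ := tdecomp z
    have hsw : swapAct z = swapPoly f0 ⊗ₜ[ℚ] 1 + swapPoly f1 ⊗ₜ[ℚ] θ₂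
        + swapPoly f2 ⊗ₜ[ℚ] θ₁ + -(swapPoly g ⊗ₜ[ℚ] (θ₁ * θ₂)) := by
      rw [hzd, map_add, map_add, map_add, sAct_tmul, sAct_tmul, sAct_tmul, sAct_tmul,
        map_one, Em_θ₁, Em_θ₂, Em_θ₁₂, tmul_neg]
    have h2 : z + swapAct z
        = ((f0 + swapPoly f0) ⊗ₜ[ℚ] 1)
          + ((f1 + swapPoly f2) ⊗ₜ[ℚ] θ₁ + (swapPoly (f1 + swapPoly f2)) ⊗ₜ[ℚ] θ₂)
          + ((g - swapPoly g) ⊗ₜ[ℚ] (θ₁ * θ₂)) := by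
      rw [hsw, hzd, map_add, sp_sp, add_tmul, add_tmul, add_tmul, sub_tmul]
      abel
    have hkey : z = (2⁻¹ : ℚ) • (z + swapAct z) := by
      rw [hz, ← two_smul ℚ z, smul_smul]; norm_num
    rw [hkey, h2]
    exact Subalgebra.smul_mem _
      (add_mem (add_mem (A0_map (sym_mem f0)) (L2 _)) (L3 g)) _
  · rw [A1, Algebra.adjoin_le_iff]
    rintro p (rfl | rfl | rfl | rfl | rfl | rfl | rfl | rfl) <;>
      rw [SetLike.mem_coe, AlgHom.mem_equalizer, AlgHom.id_apply]
    · rw [sAct_tmul, map_one, map_add, sp_x₁, sp_x₂, add_comm]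
    · rw [sAct_tmul, map_one, map_add, sp_y₁, sp_y₂, add_comm]
    · rw [sAct_tmul, map_one, map_mul, sp_x₁, sp_x₂, mul_comm]
    · rw [sAct_tmul, map_one, map_mul, sp_y₁, sp_y₂, mul_comm]
    · rw [sAct_tmul, map_one, map_add, map_mul, map_mul, sp_x₁, sp_x₂, sp_y₁, sp_y₂, add_comm]
    · rw [sAct_tmul, map_one, map_add, Em_θ₁, Em_θ₂, add_comm]
    · rw [map_add, sAct_tmul, sAct_tmul, sp_x₁, sp_x₂, Em_θ₁, Em_θ₂, add_comm]
    · rw [map_add, sAct_tmul, sAct_tmul, sp_y₁, sp_y₂, Em_θ₁, Em_θ₂, add_comm]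


theorem statement_13 :
    (AlgHom.equalizer swapAct (AlgHom.id ℚ P13) =
      Algebra.adjoin ℚ
        ({(x₁ + x₂) ⊗ₜ[ℚ] 1, (y₁ + y₂) ⊗ₜ[ℚ] 1, (x₁ * x₂) ⊗ₜ[ℚ] 1, (y₁ * y₂) ⊗ₜ[ℚ] 1,
          (x₁ * y₁ + x₂ * y₂) ⊗ₜ[ℚ] 1, (1 : Poly2) ⊗ₜ[ℚ] (θ₁ + θ₂),
          x₁ ⊗ₜ[ℚ] θ₁ + x₂ ⊗ₜ[ℚ] θ₂, y₁ ⊗ₜ[ℚ] θ₁ + y₂ ⊗ₜ[ℚ] θ₂} : Set P13)) ∧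
    (AlgHom.equalizer swapPoly (AlgHom.id ℚ Poly2) =
      Algebra.adjoin ℚ
        ({x₁ + x₂, y₁ + y₂, x₁ * x₂, y₁ * y₂, x₁ * y₁ + x₂ * y₂} : Set Poly2)) := by
  exact ⟨part1, part2⟩

end
end
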